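/- arXiv:1412.2202 — 6 statements merged into one kernel-verified Lean document; each statement's English description precedes it below -/
import Mathlib

section
/- Suppose q is non-trivial, i.e. c_{n,m} ≠ 0 for some (n,m) with m < d. Then the set M = {(d − m)/(n − γ) : (n,m) a pair of nonnegative integers with c_{n,m} ≠ 0 and n > γ} is nonempty, its supremum m_f is strictly positive, and the supremum is attained (m_f = max M). Moreover, if A ≠ ∅, then min A exists and min A = m_f. -/
/-!
Among the exponents `(n, m)` with `n > γ`, those whose ratio `(d - m)/(n - γ)` is at least a fixed
positive value have `m ≤ d` and `n - γ` bounded, so there are finitely many of them; the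
non-triviality of `q` supplies a positive ratio, hence the ratios have a positive maximum `m_f`.
For `n > γ` the inequality `a γ + d ≤ a n + m` says exactly that `(d - m)/(n - γ) ≤ a`, and for
`n = γ` it holds automatically since then `m > d`. So `A` is the set of upper bounds of `M` in
`[0, ∞)` satisfying `a γ + d ≤ δ`; this constraint is inherited by the smaller `m_f`, which is
therefore the least element of `A`.
-/

open Set

/-- Minus the slope of the segment from `(γ, d)` to `p = (n, m)`. -/
noncomputable def segmentSlope (γ d : ℕ) (p : ℕ × ℕ) : ℝ :=
  ((d : ℝ) - p.2) / ((p.1 : ℝ) - γ)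

namespace segmentSlope

variable {γ d : ℕ} {p : ℕ × ℕ}

lemma denom_pos (hp : γ < p.1) : 0 < (p.1 : ℝ) - γ :=
  sub_pos.2 (Nat.cast_lt.2 hp)

lemma pos (hp : γ < p.1) (hm : p.2 < d) : 0 < segmentSlope γ d p :=
  div_pos (sub_pos.2 (Nat.cast_lt.2 hm)) (denom_pos hp)

lemma le_iff (hp : γ < p.1) {x : ℝ} :
    segmentSlope γ d p ≤ x ↔ x * γ + d ≤ x * p.1 + p.2 := by
  rw [segmentSlope, div_le_iff₀ (denom_pos hp)]
  constructor <;> intro h <;> linarith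

lemma finite_setOf_le (γ d : ℕ) {x : ℝ} (hx : 0 < x) :
    {p : ℕ × ℕ | γ < p.1 ∧ x ≤ segmentSlope γ d p}.Finite := by
  refine ((finite_Iic ⌊(γ : ℝ) + d / x⌋₊).prod (finite_Iic d)).subset ?_
  rintro ⟨n, m⟩ ⟨hn, hx_le⟩
  have hpos := denom_pos (p := (n, m)) hn
  have hprod : x * ((n : ℝ) - γ) ≤ d - m := by
    rw [segmentSlope, le_div_iff₀ hpos] at hx_le
    linarith
  have hprod_pos : 0 < x * ((n : ℝ) - γ) := mul_pos hx hpos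
  have hm : (m : ℝ) ≤ d := by linarith
  have hn_le : (n : ℝ) - γ ≤ d / x := by
    rw [le_div_iff₀ hx]
    linarith
  exact ⟨Nat.le_floor (by linarith), Nat.cast_le.1 hm⟩

end segmentSlope

lemma exists_isGreatest_of_finite_inter_Ici {α : Type*} [LinearOrder α] {s : Set α} {x : α}
    (hx : x ∈ s) (hfin : (s ∩ Ici x).Finite) : ∃ y, IsGreatest s y := by
  obtain ⟨y, ⟨hys, hxy⟩, hy⟩ := exists_max_image _ id hfin ⟨x, hx, le_rfl⟩
  refine ⟨y, hys, fun z hz => ?_⟩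
  rcases le_total x z with hxz | hzx
  · exact hy z ⟨hz, hxz⟩
  · exact hzx.trans hxy

lemma exists_isGreatest_image_segmentSlope {γ d : ℕ} {S : Set (ℕ × ℕ)} {p₀ : ℕ × ℕ}
    (hp₀ : p₀ ∈ S) (hγ : γ < p₀.1) (hd : p₀.2 < d) :
    ∃ μ, IsGreatest (segmentSlope γ d '' {p | p ∈ S ∧ γ < p.1}) μ := by
  refine exists_isGreatest_of_finite_inter_Ici (x := segmentSlope γ d p₀) ⟨p₀, ⟨hp₀, hγ⟩, rfl⟩ ?_
  refine ((segmentSlope.finite_setOf_le γ d (segmentSlope.pos hγ hd)).image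
    (segmentSlope γ d)).subset ?_
  rintro _ ⟨⟨p, ⟨-, hp⟩, rfl⟩, hle⟩
  exact ⟨p, ⟨hp, hle⟩, rfl⟩

lemma forall_le_iff_mem_upperBounds_image_segmentSlope {γ d : ℕ} {S : Set (ℕ × ℕ)}
    (hS : ∀ p ∈ S, γ < p.1 ∨ p.1 = γ ∧ d ≤ p.2) {x : ℝ} :
    (∀ p ∈ S, x * γ + d ≤ x * p.1 + p.2) ↔
      x ∈ upperBounds (segmentSlope γ d '' {p | p ∈ S ∧ γ < p.1}) := by
  constructor
  · rintro h _ ⟨p, ⟨hpS, hp⟩, rfl⟩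
    exact (segmentSlope.le_iff hp).2 (h p hpS)
  · intro h p hpS
    rcases hS p hpS with hp | ⟨hp, hdp⟩
    · exact (segmentSlope.le_iff hp).1 (h ⟨p, ⟨hpS, hp⟩, rfl⟩)
    · rw [hp]
      gcongr

theorem mf_properties_general
    (δ d γ : ℕ)
    (c : ℕ → ℕ → ℂ)
    (hc : ∀ n m : ℕ, c n m ≠ 0 → 2 ≤ n + m ∧ (γ < n ∨ (n = γ ∧ d < m)))
    (hnontriv : ∃ n m : ℕ, c n m ≠ 0 ∧ m < d)
    (A : Set ℝ)
    (hA : A = {x : ℝ | 0 ≤ x ∧ x * γ + d ≤ δ ∧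
      ∀ n m : ℕ, c n m ≠ 0 → x * γ + d ≤ x * n + m})
    (M : Set ℝ)
    (hM : M = {x : ℝ | ∃ n m : ℕ, c n m ≠ 0 ∧ γ < n ∧
      x = ((d : ℝ) - (m : ℝ)) / ((n : ℝ) - (γ : ℝ))}) :
    M.Nonempty ∧ 0 < sSup M ∧ sSup M ∈ M ∧
      (A.Nonempty → IsLeast A (sSup M)) := by
  set S : Set (ℕ × ℕ) := {p | c p.1 p.2 ≠ 0}
  have hS : ∀ p ∈ S, γ < p.1 ∨ p.1 = γ ∧ d ≤ p.2 := fun p hp =>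
    (hc p.1 p.2 hp).2.imp_right fun h => ⟨h.1, h.2.le⟩
  have hM' : M = segmentSlope γ d '' {p | p ∈ S ∧ γ < p.1} := by
    ext x
    simp only [hM, segmentSlope, S, mem_ofPred_eq, mem_image, Prod.exists]
    grind
  have hA' : A = {x : ℝ | 0 ≤ x ∧ x * γ + d ≤ δ ∧ x ∈ upperBounds M} := by
    rw [hA, hM']
    simp_rw [← forall_le_iff_mem_upperBounds_image_segmentSlope hS]
    simp [S]
  obtain ⟨n₀, m₀, hc₀, hm₀⟩ := hnontriv
  have hn₀ : γ < n₀ := (hS (n₀, m₀) hc₀).resolve_right fun h => (h.2.trans_lt hm₀).false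
  obtain ⟨μ, hμ⟩ := exists_isGreatest_image_segmentSlope (S := S) (p₀ := (n₀, m₀)) hc₀ hn₀ hm₀
  have h₀ : segmentSlope γ d (n₀, m₀) ∈ M := by
    rw [hM']
    exact ⟨(n₀, m₀), ⟨hc₀, hn₀⟩, rfl⟩
  rw [← hM'] at hμ
  have hμ_pos : 0 < μ := (segmentSlope.pos (p := (n₀, m₀)) hn₀ hm₀).trans_le (hμ.2 h₀)
  rw [hμ.csSup_eq, hA']
  refine ⟨hμ.nonempty, hμ_pos, hμ.1, ?_⟩
  rintro ⟨a, -, haδ, ha⟩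
  refine ⟨⟨hμ_pos.le, ?_, hμ.2⟩, fun x hx => hx.2.2 hμ.1⟩
  calc μ * γ + d ≤ a * γ + d := by gcongr; exact ha hμ.1
    _ ≤ δ := haδ

/-- Properties of `m_f` (Section 2 of Ueno): if `q` is non-trivial then the set
`M = {(d−m)/(n−γ) : c_{n,m} ≠ 0, n > γ}` is nonempty, its supremum `m_f` is
strictly positive and attained, and if `A ≠ ∅` then `min A` exists and equals `m_f`. -/
theorem mf_properties
    (δ d γ : ℕ) (hδ : 2 ≤ δ) (hd : 1 ≤ d) (hγd : 2 ≤ γ + d)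
    (b : ℂ) (hb : b ≠ 0)
    (R : ℝ) (hR : 0 < R)
    (c : ℕ → ℕ → ℂ)
    (hc : ∀ n m : ℕ, c n m ≠ 0 → 2 ≤ n + m ∧ (γ < n ∨ (n = γ ∧ d < m)))
    (q : ℂ → ℂ → ℂ)
    (hqsum : ∀ z w : ℂ, ‖z‖ < R → ‖w‖ < R →
      Summable (fun nm : ℕ × ℕ => c nm.1 nm.2 * z ^ nm.1 * w ^ nm.2))
    (hq : ∀ z w : ℂ, ‖z‖ < R → ‖w‖ < R →
      q z w = b * z ^ γ * w ^ d + ∑' nm : ℕ × ℕ, c nm.1 nm.2 * z ^ nm.1 * w ^ nm.2)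
    (hnontriv : ∃ n m : ℕ, c n m ≠ 0 ∧ m < d)
    (A : Set ℝ)
    (hA : A = {x : ℝ | 0 ≤ x ∧ x * γ + d ≤ δ ∧
      ∀ n m : ℕ, c n m ≠ 0 → x * γ + d ≤ x * n + m})
    (M : Set ℝ)
    (hM : M = {x : ℝ | ∃ n m : ℕ, c n m ≠ 0 ∧ γ < n ∧
      x = ((d : ℝ) - (m : ℝ)) / ((n : ℝ) - (γ : ℝ))}) :
    M.Nonempty ∧ 0 < sSup M ∧ sSup M ∈ M ∧
      (A.Nonempty → IsLeast A (sSup M)) :=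
  mf_properties_general δ d γ c hc hnontriv A hA M hM
end

section
/- Let n ≥ 1 and let (z,w) ∈ D with z ≠ 0 and w ≠ 0 be such that for every j with 0 ≤ j < n the iterate f^j(z,w) lies in D and has both coordinates nonzero. Then, writing f^n(z,w) = (P_n, Q_n), one has P_n = z^{δ^n} · Π_{j=1}^{n} (1 + ζ(p^{j−1}(z)))^{δ^{n−j}} and Q_n = z^{γ_n} · w^{d^n} · Π_{j=1}^{n−1} (1 + ζ(p^{j−1}(z)))^{γ_{n−j}} · Π_{j=1}^{n} (1 + η(f^{j−1}(z,w)))^{d^{n−j}}, where p^{j−1} denotes the (j−1)-st iterate of p. -/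
/-!
Along the orbit write `p(x) = x^δ (1 + ζ x)` and `q(x, y) = x^γ y^d (1 + η (x, y))`. The coordinates
`(x_k, y_k)` of `f^k(z, w)` then satisfy the multiplicative recurrences `x_{k+1} = x_k^δ u_k` and
`y_{k+1} = x_k^γ y_k^d v_k`, which are solved by induction in any commutative monoid. The exponent
of `z` in `y_n` obeys `γ_{n+1} = γ δ^n + d γ_n`, and the factor `u_{n-1}` never enters `y_n`
because its exponent would be `γ_0 = 0`.
-/

open Finset

theorem sum_Icc_pow_mul_pow_succ (a b n : ℕ) :
    ∑ i ∈ Icc 1 (n + 1), a ^ (n + 1 - i) * b ^ (i - 1)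
      = a ^ n + b * ∑ i ∈ Icc 1 n, a ^ (n - i) * b ^ (i - 1) := by
  rw [Icc_eq_cons_Ioc (by omega), sum_cons, ← Icc_add_one_left_eq_Ioc, ← map_add_right_Icc 1 n 1,
    sum_map, mul_sum]
  refine congrArg₂ (· + ·) (by simp) (sum_congr rfl fun i hi => ?_)
  obtain ⟨j, rfl⟩ : ∃ j, i = j + 1 := ⟨i - 1, by simp at hi; omega⟩
  simp only [addRightEmbedding_apply, Nat.reduceSubDiff, add_tsub_cancel_right, pow_succ]
  ring

/-- The exponent `γ_n` of the paper. -/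
def skewExponent (δ d γ n : ℕ) : ℕ :=
  γ * ∑ i ∈ Icc 1 n, δ ^ (n - i) * d ^ (i - 1)

section SkewExponent

variable {δ d γ : ℕ}

@[simp]
theorem skewExponent_zero : skewExponent δ d γ 0 = 0 := by
  simp [skewExponent]

theorem skewExponent_succ (n : ℕ) :
    skewExponent δ d γ (n + 1) = γ * δ ^ n + d * skewExponent δ d γ n := by
  rw [skewExponent, skewExponent, sum_Icc_pow_mul_pow_succ]
  ring

end SkewExponent

section Recurrence

variable {M : Type*} [CommMonoid M]

theorem prod_Icc_pow_pow_mul_succ (g : ℕ → M) (a n : ℕ) :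
    (∏ j ∈ Icc 1 n, g j ^ a ^ (n - j)) ^ a * g (n + 1)
      = ∏ j ∈ Icc 1 (n + 1), g j ^ a ^ (n + 1 - j) := by
  rw [prod_Icc_succ_top (by omega), Nat.sub_self, pow_zero, pow_one, ← prod_pow]
  congr 1
  refine prod_congr rfl fun j hj => ?_
  rw [← pow_mul, ← pow_succ, Nat.sub_add_comm (mem_Icc.mp hj).2]

theorem eq_pow_mul_prod_of_succ_eq {x u : ℕ → M} {δ n : ℕ}
    (hx : ∀ k < n, x (k + 1) = x k ^ δ * u k) :
    x n = x 0 ^ δ ^ n * ∏ j ∈ Icc 1 n, u (j - 1) ^ δ ^ (n - j) := by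
  induction n with
  | zero => simp
  | succ n ih =>
    rw [hx n n.lt_add_one, ih fun k hk => hx k (by omega), mul_pow, ← pow_mul, ← pow_succ,
      mul_assoc]
    exact congrArg _ (prod_Icc_pow_pow_mul_succ (fun j => u (j - 1)) δ n)

theorem prod_Icc_pred_pow_skewExponent (g : ℕ → M) (δ d γ n : ℕ) :
    ∏ j ∈ Icc 1 (n - 1), g j ^ skewExponent δ d γ (n - j)
      = ∏ j ∈ Icc 1 n, g j ^ skewExponent δ d γ (n - j) := by
  cases n with
  | zero => rfl
  | succ n => rw [prod_Icc_succ_top (by omega)]; simp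

theorem eq_pow_mul_pow_mul_prod_of_succ_eq {x y u v : ℕ → M} {δ d γ n : ℕ}
    (hx : ∀ k < n, x (k + 1) = x k ^ δ * u k)
    (hy : ∀ k < n, y (k + 1) = x k ^ γ * y k ^ d * v k) :
    y n = x 0 ^ skewExponent δ d γ n * y 0 ^ d ^ n *
      (∏ j ∈ Icc 1 (n - 1), u (j - 1) ^ skewExponent δ d γ (n - j)) *
      ∏ j ∈ Icc 1 n, v (j - 1) ^ d ^ (n - j) := by
  induction n with
  | zero => simp
  | succ n ih =>
    rw [hy n n.lt_add_one, eq_pow_mul_prod_of_succ_eq fun k hk => hx k (by omega),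
      ih (fun k hk => hx k (by omega)) fun k hk => hy k (by omega)]
    have hx0 : (x 0 ^ δ ^ n) ^ γ * (x 0 ^ skewExponent δ d γ n) ^ d
        = x 0 ^ skewExponent δ d γ (n + 1) := by
      rw [← pow_mul, ← pow_mul, ← pow_add, skewExponent_succ, mul_comm γ, mul_comm d]
    have hy0 : (y 0 ^ d ^ n) ^ d = y 0 ^ d ^ (n + 1) := by
      rw [← pow_mul, ← pow_succ]
    have hu : (∏ j ∈ Icc 1 n, u (j - 1) ^ δ ^ (n - j)) ^ γ *
          (∏ j ∈ Icc 1 (n - 1), u (j - 1) ^ skewExponent δ d γ (n - j)) ^ d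
        = ∏ j ∈ Icc 1 (n + 1 - 1), u (j - 1) ^ skewExponent δ d γ (n + 1 - j) := by
      rw [prod_Icc_pred_pow_skewExponent, Nat.add_sub_cancel, ← prod_pow, ← prod_pow,
        ← prod_mul_distrib]
      refine prod_congr rfl fun j hj => ?_
      rw [← pow_mul, ← pow_mul, ← pow_add, Nat.sub_add_comm (mem_Icc.mp hj).2, skewExponent_succ,
        mul_comm γ, mul_comm d]
    have hv := prod_Icc_pow_pow_mul_succ (fun j => v (j - 1)) d n
    simp only [Nat.add_sub_cancel] at hv
    rw [← hx0, ← hy0, ← hu, ← hv]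
    simp only [mul_pow]
    ac_rfl

end Recurrence

theorem eq_mul_one_add_of_eq_div_sub_one {K : Type*} [Field K] {a b c : K} (hb : b ≠ 0)
    (hc : c = a / b - 1) : a = b * (1 + c) := by
  rw [hc, add_sub_cancel, mul_div_cancel₀ a hb]

theorem iterate_formula_general
    (δ d γ : ℕ)
    (p : ℂ → ℂ) (q : ℂ → ℂ → ℂ)
    (D : Set (ℂ × ℂ))
    (f : ℂ × ℂ → ℂ × ℂ) (hf : ∀ zw : ℂ × ℂ, f zw = (p zw.1, q zw.1 zw.2))
    (ζ : ℂ → ℂ) (hζ : ∀ z : ℂ, z ≠ 0 → ζ z = p z / z ^ δ - 1)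
    (η : ℂ × ℂ → ℂ)
    (hη : ∀ zw : ℂ × ℂ, zw.1 ≠ 0 → zw.2 ≠ 0 →
      η zw = q zw.1 zw.2 / (zw.1 ^ γ * zw.2 ^ d) - 1)
    (gam : ℕ → ℕ)
    (hgam : ∀ n : ℕ, gam n = γ * ∑ i ∈ Finset.Icc 1 n, δ ^ (n - i) * d ^ (i - 1)) :
    ∀ n : ℕ, 1 ≤ n → ∀ zw : ℂ × ℂ,
      (∀ j : ℕ, j < n →
        f^[j] zw ∈ D ∧ (f^[j] zw).1 ≠ 0 ∧ (f^[j] zw).2 ≠ 0) →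
      (f^[n] zw).1 = zw.1 ^ (δ ^ n) *
          ∏ j ∈ Finset.Icc 1 n, (1 + ζ (p^[j - 1] zw.1)) ^ (δ ^ (n - j)) ∧
      (f^[n] zw).2 = zw.1 ^ gam n * zw.2 ^ (d ^ n) *
          (∏ j ∈ Finset.Icc 1 (n - 1), (1 + ζ (p^[j - 1] zw.1)) ^ gam (n - j)) *
          ∏ j ∈ Finset.Icc 1 n, (1 + η (f^[j - 1] zw)) ^ (d ^ (n - j)) := by
  obtain rfl : gam = skewExponent δ d γ := funext hgam
  intro n _ zw horbit
  have hfst (k : ℕ) : (f^[k] zw).1 = p^[k] zw.1 :=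
    Function.Semiconj.iterate_right (f := Prod.fst) (fun zw => by rw [hf]) k zw
  have hx : ∀ k < n, p^[k + 1] zw.1 = (p^[k] zw.1) ^ δ * (1 + ζ (p^[k] zw.1)) := by
    intro k hk
    have hz : p^[k] zw.1 ≠ 0 := hfst k ▸ (horbit k hk).2.1
    rw [Function.iterate_succ_apply']
    exact eq_mul_one_add_of_eq_div_sub_one (pow_ne_zero δ hz) (hζ _ hz)
  have hy : ∀ k < n, (f^[k + 1] zw).2
      = (p^[k] zw.1) ^ γ * (f^[k] zw).2 ^ d * (1 + η (f^[k] zw)) := by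
    intro k hk
    obtain ⟨-, hz, hw⟩ := horbit k hk
    rw [Function.iterate_succ_apply', hf, ← hfst]
    exact eq_mul_one_add_of_eq_div_sub_one (by positivity) (hη _ hz hw)
  refine ⟨?_, ?_⟩
  · rw [hfst]
    exact eq_pow_mul_prod_of_succ_eq (x := fun k => p^[k] zw.1)
      (u := fun k => 1 + ζ (p^[k] zw.1)) hx
  · exact eq_pow_mul_pow_mul_prod_of_succ_eq (x := fun k => p^[k] zw.1)
      (u := fun k => 1 + ζ (p^[k] zw.1)) (y := fun k => (f^[k] zw).2)
      (v := fun k => 1 + η (f^[k] zw)) hx hy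

/-- Explicit formula for the iterates of the skew product `f = (p, q)`
(Section 3 of Ueno): writing `p(z) = z^δ(1 + ζ(z))` and
`q(z,w) = z^γ w^d (1 + η(z,w))`, the `n`-th iterate of `f` has components
`P_n = z^{δ^n} ∏_{j=1}^n (1 + ζ(p^{j−1}(z)))^{δ^{n−j}}` and
`Q_n = z^{γ_n} w^{d^n} ∏_{j=1}^{n−1} (1 + ζ(p^{j−1}(z)))^{γ_{n−j}}
        ∏_{j=1}^n (1 + η(f^{j−1}(z,w)))^{d^{n−j}}`,
provided all the intermediate iterates stay in the polydisc `D` and have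
nonzero coordinates. -/
theorem iterate_formula
    (δ d γ : ℕ) (hδ : 2 ≤ δ) (hd : 2 ≤ d)
    (R : ℝ) (hR : 0 < R)
    (a : ℕ → ℂ) (ha : ∀ k : ℕ, k ≤ δ → a k = 0)
    (c : ℕ → ℕ → ℂ)
    (hc : ∀ n m : ℕ, c n m ≠ 0 → 2 ≤ n + m ∧ (γ < n ∨ (n = γ ∧ d < m)))
    (p : ℂ → ℂ) (q : ℂ → ℂ → ℂ)
    (D : Set (ℂ × ℂ))
    (hD : D = {zw : ℂ × ℂ | ‖zw.1‖ < R ∧ ‖zw.2‖ < R})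
    (hpsum : ∀ z : ℂ, ‖z‖ < R → Summable (fun k : ℕ => a k * z ^ k))
    (hp : ∀ z : ℂ, ‖z‖ < R → p z = z ^ δ + ∑' k : ℕ, a k * z ^ k)
    (hqsum : ∀ z w : ℂ, ‖z‖ < R → ‖w‖ < R →
      Summable (fun nm : ℕ × ℕ => c nm.1 nm.2 * z ^ nm.1 * w ^ nm.2))
    (hq : ∀ z w : ℂ, ‖z‖ < R → ‖w‖ < R →
      q z w = z ^ γ * w ^ d + ∑' nm : ℕ × ℕ, c nm.1 nm.2 * z ^ nm.1 * w ^ nm.2)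
    (f : ℂ × ℂ → ℂ × ℂ) (hf : ∀ zw : ℂ × ℂ, f zw = (p zw.1, q zw.1 zw.2))
    (ζ : ℂ → ℂ) (hζ : ∀ z : ℂ, z ≠ 0 → ζ z = p z / z ^ δ - 1)
    (η : ℂ × ℂ → ℂ)
    (hη : ∀ zw : ℂ × ℂ, zw.1 ≠ 0 → zw.2 ≠ 0 →
      η zw = q zw.1 zw.2 / (zw.1 ^ γ * zw.2 ^ d) - 1)
    (gam : ℕ → ℕ)
    (hgam : ∀ n : ℕ, gam n = γ * ∑ i ∈ Finset.Icc 1 n, δ ^ (n - i) * d ^ (i - 1)) :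
    ∀ n : ℕ, 1 ≤ n → ∀ zw : ℂ × ℂ,
      (∀ j : ℕ, j < n →
        f^[j] zw ∈ D ∧ (f^[j] zw).1 ≠ 0 ∧ (f^[j] zw).2 ≠ 0) →
      (f^[n] zw).1 = zw.1 ^ (δ ^ n) *
          ∏ j ∈ Finset.Icc 1 n, (1 + ζ (p^[j - 1] zw.1)) ^ (δ ^ (n - j)) ∧
      (f^[n] zw).2 = zw.1 ^ gam n * zw.2 ^ (d ^ n) *
          (∏ j ∈ Finset.Icc 1 (n - 1), (1 + ζ (p^[j - 1] zw.1)) ^ gam (n - j)) *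
          ∏ j ∈ Finset.Icc 1 n, (1 + η (f^[j - 1] zw)) ^ (d ^ (n - j)) :=
  iterate_formula_general δ d γ p q D f hf ζ hζ η hη gam hgam
end

section
/- Let A < B be real numbers and ε > 0. Let g be a holomorphic function on the strip S = {W ∈ ℂ : A < Re W < B} satisfying |g(W) − W| < ε for all W ∈ S. Then g is injective on the substrip S' = {W ∈ ℂ : A + 2ε < Re W < B − 2ε}. -/
open Metric Set

/-!
Write `g = id + h`. On a disc of radius `2ε` inside the strip, `‖h‖ ≤ ε`, so the Cauchy estimate
gives `‖h'‖ ≤ 1/2` on the substrip. The substrip is convex, hence `h` is `1/2`-Lipschitz there, and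
a perturbation of the identity by a contraction is injective.
-/

theorem Set.injOn_of_norm_sub_sub_le {E : Type*} [NormedAddCommGroup E] {g : E → E} {s : Set E}
    {k : ℝ} (hk : k < 1) (hlip : ∀ x ∈ s, ∀ y ∈ s, ‖(g y - y) - (g x - x)‖ ≤ k * ‖y - x‖) :
    InjOn g s := by
  intro x hx y hy hxy
  have hle : ‖y - x‖ ≤ k * ‖y - x‖ := by
    simpa [hxy, norm_sub_rev x y] using hlip x hx y hy
  have hzero : ‖y - x‖ = 0 := by nlinarith [norm_nonneg (y - x)]
  exact (sub_eq_zero.mp (norm_eq_zero.mp hzero)).symm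

theorem Complex.closedBall_subset_re_strip {A B r : ℝ} {c : ℂ} (hA : A + r < c.re)
    (hB : c.re < B - r) : closedBall c r ⊆ {W : ℂ | A < W.re ∧ W.re < B} := by
  intro z hz
  rw [mem_closedBall, Complex.dist_eq] at hz
  have hre : |z.re - c.re| ≤ r := by
    simpa only [Complex.sub_re] using (Complex.abs_re_le_norm (z - c)).trans hz
  rw [abs_le] at hre
  exact ⟨by linarith, by linarith⟩

/-- Cauchy estimates on discs of radius `r` around a convex set, integrated along segments. -/
theorem Convex.norm_image_sub_le_of_closedBall_subset {f : ℂ → ℂ} {U s : Set ℂ} {r C : ℝ}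
    (hr : 0 < r) (hf : DifferentiableOn ℂ f U) (hbound : ∀ z ∈ U, ‖f z‖ ≤ C)
    (hs : Convex ℝ s) (hball : ∀ c ∈ s, closedBall c r ⊆ U) :
    ∀ x ∈ s, ∀ y ∈ s, ‖f y - f x‖ ≤ C / r * ‖y - x‖ := by
  have hnhds : ∀ c ∈ s, U ∈ nhds c := fun c hc =>
    Filter.mem_of_superset (ball_mem_nhds c hr) (ball_subset_closedBall.trans (hball c hc))
  have hderiv : ∀ c ∈ s, ‖deriv f c‖ ≤ C / r := by
    intro c hc
    have hcl : DiffContOnCl ℂ f (ball c r) := by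
      apply DifferentiableOn.diffContOnCl
      rw [closure_ball c hr.ne']
      exact hf.mono (hball c hc)
    exact Complex.norm_deriv_le_of_forall_mem_sphere_norm_le hr hcl
      fun z hz => hbound z (hball c hc (sphere_subset_closedBall hz))
  exact fun x hx y hy => hs.norm_image_sub_le_of_norm_deriv_le
    (fun c hc => hf.differentiableAt (hnhds c hc)) hderiv hx hy

theorem injective_on_substrip_general
    (A B ε : ℝ) (hε : 0 < ε)
    (g : ℂ → ℂ)
    (hg : DifferentiableOn ℂ g {W : ℂ | A < W.re ∧ W.re < B})
    (hclose : ∀ W ∈ {W : ℂ | A < W.re ∧ W.re < B}, ‖g W - W‖ < ε) :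
    Set.InjOn g {W : ℂ | A + 2 * ε < W.re ∧ W.re < B - 2 * ε} := by
  have hconvex : Convex ℝ {W : ℂ | A + 2 * ε < W.re ∧ W.re < B - 2 * ε} :=
    (convex_halfSpace_re_gt _).inter (convex_halfSpace_re_lt _)
  have hlip := hconvex.norm_image_sub_le_of_closedBall_subset (by positivity)
    (hg.sub differentiableOn_id) (fun z hz => (hclose z hz).le)
    (fun c hc => Complex.closedBall_subset_re_strip hc.1 hc.2)
  have hhalf : ε / (2 * ε) = 1 / 2 := by field_simp
  refine Set.injOn_of_norm_sub_sub_le (k := 1 / 2) (by norm_num) fun x hx y hy => ?_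
  simpa only [hhalf, Pi.sub_apply, id] using hlip x hx y hy

/-- A holomorphic function on a vertical strip `{A < Re W < B}` that is uniformly
within `ε` of the identity is injective on the substrip `{A + 2ε < Re W < B − 2ε}`. -/
theorem injective_on_substrip
    (A B ε : ℝ) (hAB : A < B) (hε : 0 < ε)
    (g : ℂ → ℂ)
    (hg : DifferentiableOn ℂ g {W : ℂ | A < W.re ∧ W.re < B})
    (hclose : ∀ W ∈ {W : ℂ | A < W.re ∧ W.re < B}, ‖g W - W‖ < ε) :
    Set.InjOn g {W : ℂ | A + 2 * ε < W.re ∧ W.re < B - 2 * ε} :=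
  injective_on_substrip_general A B ε hε g hg hclose
end

section
/- Suppose the weight α is well-defined and α·γ < δ − 1. Then there exist constants C₁ > 0, C₂ > 0 and r₀ > 0 such that for all r with 0 < r ≤ r₀, all integers n ≥ 0, and all (z,w) ∈ U^α_r with z ≠ 0 and w ≠ 0, the n-th iterates satisfy p^n(z) ≠ 0 and both coordinates of f^n(z,w) are nonzero, and moreover |ζ(p^n(z))| ≤ C₁·r/2^n and |η(f^n(z,w))| ≤ C₂·r/2^n. -/
/-!
For small `s`, `f` maps `U^α_s` (minus the axes) into `U^α_{s/2}`. Indeed `ζ(z) = O(|z|)`, since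
`p(z) - z^δ` vanishes to order `δ + 1`, and `η = O(s)` on `U^α_s`, since there the weight
inequality `αn + m ≥ αγ + 1` makes each monomial `c_{n,m} z^n w^m` of size `O(s |z|^γ |w|)`.
So `|1 + ζ|` and `|1 + η|` lie in `[1/2, 2]`: then `|q| ≤ 2|b| |z|^γ |w| ≤ |w|/2`, and
`|p| ≤ 2|z|^δ < (s/2) |q|^α` because `δ > αγ + 1`. Hence `f^n(z,w) ∈ U^α_{r/2^n}`, where the two
estimates give `|ζ|, |η| = O(r/2^n)`.
-/

open Function Set Topology

/-- `U^α_r` with the coordinate axes removed. -/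
def weightedCone (α r : ℝ) : Set (ℂ × ℂ) :=
  {zw | zw.1 ≠ 0 ∧ zw.2 ≠ 0 ∧ ‖zw.1‖ < r * ‖zw.2‖ ^ α ∧ ‖zw.2‖ < r}

lemma Summable.exists_norm_le {ι E : Type*} [SeminormedAddCommGroup E] {f : ι → E}
    (hf : Summable f) : ∃ B > 0, ∀ i, ‖f i‖ ≤ B := by
  obtain ⟨B, hB⟩ := hf.tendsto_cofinite_zero.norm.bddAbove_range_of_cofinite
  exact ⟨max B 1, by positivity, fun i => (hB ⟨i, rfl⟩).trans (le_max_left _ _)⟩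

lemma mul_pow_le_of_mul_two_mul_pow_le {x ρ B : ℝ} {k : ℕ} (h : x * (2 * ρ) ^ k ≤ B) :
    x * ρ ^ k ≤ B * (1 / 2) ^ k :=
  calc x * ρ ^ k = x * (2 * ρ) ^ k * (1 / 2) ^ k := by rw [mul_assoc, ← mul_pow]; ring_nf
    _ ≤ B * (1 / 2) ^ k := by gcongr

/-- With `x = |z|` and `y = |w|`, this bounds the monomial `z^(γ+i) w^m` relative to `z^γ w`
on `U^α_r`; `1 ≤ α i + m` is the weight condition `αγ + 1 ≤ α (γ + i) + m`. -/
lemma pow_mul_pow_le_of_le_mul_rpow {α x y r ρ : ℝ} {i m : ℕ} (hα : 0 ≤ α) (hx : 0 ≤ x)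
    (hy : 0 < y) (hxy : x ≤ r * y ^ α) (hyr : y ≤ r) (hrρ : r ≤ ρ) (hρ1 : ρ ≤ 1)
    (hweight : 1 ≤ α * i + m) (hdeg : 1 ≤ i ∨ 2 ≤ m) :
    x ^ i * y ^ m ≤ r * y * ρ ^ (i + m) / ρ ^ 2 := by
  have hr : 0 < r := hy.trans_le hyr
  have hρ : 0 < ρ := hr.trans_le hrρ
  have hαi : 0 ≤ α * i := by positivity
  have hE : 0 ≤ (i : ℝ) + α * i + m - 2 := by
    have hdeg' : (1 : ℝ) ≤ i ∨ (2 : ℝ) ≤ m := by exact_mod_cast hdeg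
    rcases hdeg' with h | h <;> linarith
  calc x ^ i * y ^ m ≤ (r * y ^ α) ^ i * y ^ m := by gcongr
    _ = r ^ i * (y * y ^ (α * i + m - 1)) := by
        rw [mul_pow, ← Real.rpow_mul_natCast hy.le, ← Real.rpow_natCast y m, mul_assoc,
          ← Real.rpow_add hy, show α * i + m = 1 + (α * i + m - 1) by ring, Real.rpow_add hy,
          Real.rpow_one, add_sub_cancel_left]
    _ ≤ r ^ i * (y * r ^ (α * i + m - 1)) := by gcongr
    _ = r * y * r ^ ((i : ℝ) + α * i + m - 2) := by
        rw [mul_left_comm, ← Real.rpow_natCast r i, ← Real.rpow_add hr,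
          show (i : ℝ) + (α * i + m - 1) = 1 + (i + α * i + m - 2) by ring, Real.rpow_add hr,
          Real.rpow_one]
        ring
    _ ≤ r * y * ρ ^ ((i : ℝ) + α * i + m - 2) := by gcongr
    _ ≤ r * y * ρ ^ ((i + m : ℕ) - 2 : ℝ) :=
        mul_le_mul_of_nonneg_left
          (Real.rpow_le_rpow_of_exponent_ge hρ hρ1 (by push_cast; linarith)) (by positivity)
    _ = r * y * ρ ^ (i + m) / ρ ^ 2 := by
        rw [Real.rpow_sub hρ, Real.rpow_natCast, Real.rpow_two, mul_div_assoc]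

lemma exists_norm_tsum_mul_pow_le {a : ℕ → ℂ} {N : ℕ} (ha : ∀ k < N, a k = 0) {ρ : ℝ}
    (hρ : 0 < ρ) (hsum : Summable fun k => a k * (2 * ρ : ℂ) ^ k) :
    ∃ C > 0, ∀ z : ℂ, ‖z‖ ≤ ρ → ‖∑' k, a k * z ^ k‖ ≤ C * ‖z‖ ^ N := by
  obtain ⟨B, hB0, hB⟩ := hsum.exists_norm_le
  refine ⟨2 * B / ρ ^ N, by positivity, fun z hz => ?_⟩
  have hterm : ∀ k, ‖a k * z ^ k‖ ≤ B / ρ ^ N * ‖z‖ ^ N * (1 / 2) ^ k := by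
    intro k
    rcases lt_or_ge k N with hk | hk
    · simp only [ha k hk, zero_mul, norm_zero]
      positivity
    obtain ⟨j, rfl⟩ := Nat.exists_eq_add_of_le hk
    have hcoef : ‖a (N + j)‖ * ρ ^ (N + j) ≤ B * (1 / 2) ^ (N + j) :=
      mul_pow_le_of_mul_two_mul_pow_le <| by
        simpa [norm_mul, norm_pow, Complex.norm_real, abs_of_pos hρ] using hB (N + j)
    calc ‖a (N + j) * z ^ (N + j)‖ = ‖a (N + j)‖ * ‖z‖ ^ j * ‖z‖ ^ N := by
          rw [norm_mul, norm_pow, pow_add]; ring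
      _ ≤ ‖a (N + j)‖ * ρ ^ j * ‖z‖ ^ N := by gcongr
      _ = ‖a (N + j)‖ * ρ ^ (N + j) / ρ ^ N * ‖z‖ ^ N := by rw [pow_add]; field_simp
      _ ≤ B * (1 / 2) ^ (N + j) / ρ ^ N * ‖z‖ ^ N := by gcongr
      _ = B / ρ ^ N * ‖z‖ ^ N * (1 / 2) ^ (N + j) := by ring
  calc ‖∑' k, a k * z ^ k‖ ≤ B / ρ ^ N * ‖z‖ ^ N * 2 :=
        tsum_of_norm_bounded (hasSum_geometric_two.mul_left _) hterm
    _ = 2 * B / ρ ^ N * ‖z‖ ^ N := by ring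

lemma exists_norm_tsum_le_of_mem_weightedCone {c : ℕ → ℕ → ℂ} {γ : ℕ} {α ρ : ℝ} (hα : 0 ≤ α)
    (hsupp : ∀ n m, c n m ≠ 0 → γ ≤ n ∧ (γ < n ∨ 1 < m))
    (hweight : ∀ n m, c n m ≠ 0 → α * γ + 1 ≤ α * n + m) (hρ : 0 < ρ) (hρ1 : ρ ≤ 1)
    (hsum : Summable fun nm : ℕ × ℕ => c nm.1 nm.2 * (2 * ρ : ℂ) ^ nm.1 * (2 * ρ : ℂ) ^ nm.2) :
    ∃ C > 0, ∀ s ≤ ρ, ∀ zw ∈ weightedCone α s,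
      ‖∑' nm : ℕ × ℕ, c nm.1 nm.2 * zw.1 ^ nm.1 * zw.2 ^ nm.2‖ ≤
        C * s * ‖zw.1‖ ^ γ * ‖zw.2‖ := by
  obtain ⟨B, hB0, hB⟩ := hsum.exists_norm_le
  refine ⟨4 * B / ρ ^ (γ + 2), by positivity, fun s hsρ zw hzw => ?_⟩
  obtain ⟨-, hw, hzs, hws⟩ := hzw
  have hs : 0 < s := (norm_nonneg _).trans_lt hws
  set x := ‖zw.1‖
  set y := ‖zw.2‖
  have hterm : ∀ nm : ℕ × ℕ, ‖c nm.1 nm.2 * zw.1 ^ nm.1 * zw.2 ^ nm.2‖ ≤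
      B / ρ ^ (γ + 2) * s * x ^ γ * y * ((1 / 2) ^ nm.1 * (1 / 2) ^ nm.2) := by
    rintro ⟨n, m⟩
    by_cases hc : c n m = 0
    · simp only [hc, zero_mul, norm_zero]
      positivity
    have hnm := hsupp n m hc
    obtain ⟨i, rfl⟩ : ∃ i, n = γ + i := ⟨n - γ, by omega⟩
    have hdeg : 1 ≤ i ∨ 2 ≤ m := by omega
    have hw1 : 1 ≤ α * i + m := by
      have := hweight _ _ hc
      push_cast at this
      linarith
    have hcoef : ‖c (γ + i) m‖ * ρ ^ (γ + i + m) ≤ B * (1 / 2) ^ (γ + i + m) :=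
      mul_pow_le_of_mul_two_mul_pow_le <| by
        simpa [norm_mul, norm_pow, Complex.norm_real, abs_of_pos hρ, pow_add, mul_assoc]
          using hB (γ + i, m)
    have hkey : x ^ i * y ^ m ≤ s * y * ρ ^ (i + m) / ρ ^ 2 :=
      pow_mul_pow_le_of_le_mul_rpow hα (norm_nonneg _) (norm_pos_iff.2 hw) hzs.le hws.le hsρ
        hρ1 hw1 hdeg
    calc ‖c (γ + i) m * zw.1 ^ (γ + i) * zw.2 ^ m‖
          = ‖c (γ + i) m‖ * x ^ γ * (x ^ i * y ^ m) := by
          rw [norm_mul, norm_mul, norm_pow, norm_pow, pow_add]; ring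
      _ ≤ ‖c (γ + i) m‖ * x ^ γ * (s * y * ρ ^ (i + m) / ρ ^ 2) := by gcongr
      _ = ‖c (γ + i) m‖ * ρ ^ (γ + i + m) * (s * x ^ γ * y / ρ ^ (γ + 2)) := by
          rw [add_assoc γ i m, pow_add, pow_add]; field_simp; ring
      _ ≤ B * (1 / 2) ^ (γ + i + m) * (s * x ^ γ * y / ρ ^ (γ + 2)) := by gcongr
      _ = _ := by rw [pow_add (1 / 2 : ℝ) (γ + i) m]; ring
  have hgeom : HasSum (fun nm : ℕ × ℕ => (1 / 2 : ℝ) ^ nm.1 * (1 / 2) ^ nm.2) 4 := by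
    have h := hasSum_geometric_two.mul hasSum_geometric_two
      (summable_geometric_two.mul_of_nonneg summable_geometric_two
        (fun _ => by positivity) (fun _ => by positivity))
    rwa [show (2 : ℝ) * 2 = 4 by norm_num] at h
  calc _ ≤ B / ρ ^ (γ + 2) * s * x ^ γ * y * 4 :=
        tsum_of_norm_bounded (hgeom.mul_left _) hterm
    _ = 4 * B / ρ ^ (γ + 2) * s * x ^ γ * y := by ring

lemma norm_fst_lt_of_mem_weightedCone {α s : ℝ} {zw : ℂ × ℂ} (hα : 0 ≤ α) (hs : s ≤ 1)
    (hzw : zw ∈ weightedCone α s) : ‖zw.1‖ < s :=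
  calc ‖zw.1‖ < s * ‖zw.2‖ ^ α := hzw.2.2.1
    _ ≤ s * 1 := by
        have hs0 : 0 < s := (norm_nonneg _).trans_lt hzw.2.2.2
        gcongr
        exact Real.rpow_le_one (norm_nonneg _) (hzw.2.2.2.le.trans hs) hα
    _ = s := mul_one s

lemma norm_one_add_mem_Icc {u : ℂ} (hu : ‖u‖ ≤ 1 / 2) : ‖1 + u‖ ∈ Icc (1 / 2 : ℝ) 2 := by
  have hlow := norm_sub_norm_le (1 : ℂ) (-u)
  have hup := norm_add_le (1 : ℂ) u
  rw [sub_neg_eq_add, norm_neg, norm_one] at hlow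
  rw [norm_one] at hup
  constructor <;> linarith

lemma two_mul_pow_lt_of_lt_mul_rpow {α x y s K : ℝ} {δ γ : ℕ} (hα : 0 ≤ α) (hx : 0 < x)
    (hy : 0 < y) (hy1 : y ≤ 1) (hxy : x < s * y ^ α) (hδ : α * γ + 1 ≤ δ) (hK : 0 ≤ K)
    (hs : 4 * s ^ ((δ : ℝ) - α * γ - 1) ≤ K ^ α) :
    2 * x ^ δ < s / 2 * (K * x ^ γ * y) ^ α := by
  set t : ℝ := δ - α * γ - 1
  have ht : 0 ≤ t := by linarith
  have hs0 : 0 < s := pos_of_mul_pos_left (hx.trans hxy) (by positivity)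
  have hyt : y ^ (α * t) ≤ 1 := Real.rpow_le_one hy.le hy1 (by positivity)
  calc 2 * x ^ δ = 2 * x ^ (γ * α) * x ^ (t + 1) := by
        rw [← Real.rpow_natCast, mul_assoc, ← Real.rpow_add hx]
        congr 2
        ring
    _ < 2 * x ^ (γ * α) * (s * y ^ α) ^ (t + 1) := by gcongr
    _ = 2 * x ^ (γ * α) * y ^ α * s * s ^ t * y ^ (α * t) := by
        rw [Real.mul_rpow hs0.le (by positivity), ← Real.rpow_mul hy.le,
          Real.rpow_add_one hs0.ne', mul_add, mul_one, Real.rpow_add hy]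
        ring
    _ ≤ 2 * x ^ (γ * α) * y ^ α * s * s ^ t := mul_le_of_le_one_right (by positivity) hyt
    _ ≤ s / 2 * (K ^ α * x ^ (γ * α) * y ^ α) := by
        have : 0 ≤ x ^ (γ * α) * y ^ α * s := by positivity
        nlinarith
    _ = s / 2 * (K * x ^ γ * y) ^ α := by
        rw [Real.mul_rpow (by positivity) hy.le, Real.mul_rpow hK (by positivity),
          Real.rpow_natCast_mul hx.le]

lemma mem_weightedCone_half {α s : ℝ} {δ γ : ℕ} {b u v : ℂ} {zw : ℂ × ℂ} (hα : 0 ≤ α)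
    (hδ : α * γ + 1 ≤ δ) (hb : b ≠ 0) (hs1 : s ≤ 1) (hu : ‖u‖ ≤ 1 / 2) (hv : ‖v‖ ≤ 1 / 2)
    (hbs : 4 * ‖b‖ * s ^ γ ≤ 1) (hs : 4 * s ^ ((δ : ℝ) - α * γ - 1) ≤ (‖b‖ / 2) ^ α)
    (hzw : zw ∈ weightedCone α s) :
    (zw.1 ^ δ * (1 + u), b * zw.1 ^ γ * zw.2 * (1 + v)) ∈ weightedCone α (s / 2) := by
  have hxs := norm_fst_lt_of_mem_weightedCone hα hs1 hzw
  obtain ⟨hz, hw, hzs, hws⟩ := hzw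
  obtain ⟨hu₁, hu₂⟩ := norm_one_add_mem_Icc hu
  obtain ⟨hv₁, hv₂⟩ := norm_one_add_mem_Icc hv
  have hx : 0 < ‖zw.1‖ := norm_pos_iff.2 hz
  have hy : 0 < ‖zw.2‖ := norm_pos_iff.2 hw
  have hs0 : 0 < s := hy.trans hws
  have hnorm : ‖b * zw.1 ^ γ * zw.2 * (1 + v)‖ = ‖b‖ * ‖zw.1‖ ^ γ * ‖zw.2‖ * ‖1 + v‖ := by
    simp only [norm_mul, norm_pow]
  refine ⟨?_, ?_, ?_, ?_⟩
  · exact mul_ne_zero (pow_ne_zero _ hz) (norm_pos_iff.1 (by linarith))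
  · exact mul_ne_zero (by simp [hb, hz, hw]) (norm_pos_iff.1 (by linarith))
  · calc ‖zw.1 ^ δ * (1 + u)‖ ≤ 2 * ‖zw.1‖ ^ δ := by
          rw [norm_mul, norm_pow, mul_comm]
          gcongr
      _ < s / 2 * (‖b‖ / 2 * ‖zw.1‖ ^ γ * ‖zw.2‖) ^ α :=
          two_mul_pow_lt_of_lt_mul_rpow hα hx hy (hws.le.trans hs1) hzs hδ (by positivity) hs
      _ ≤ s / 2 * ‖b * zw.1 ^ γ * zw.2 * (1 + v)‖ ^ α := by
          rw [hnorm]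
          gcongr s / 2 * ?_ ^ α
          have := mul_le_mul_of_nonneg_left hv₁
            (by positivity : 0 ≤ ‖b‖ * ‖zw.1‖ ^ γ * ‖zw.2‖)
          linarith
  · calc ‖b * zw.1 ^ γ * zw.2 * (1 + v)‖ ≤ ‖b‖ * s ^ γ * ‖zw.2‖ * 2 := by
          rw [hnorm]
          gcongr
      _ ≤ ‖zw.2‖ / 2 := by nlinarith
      _ < s / 2 := by linarith

lemma iterate_mem_of_mapsTo_half {X : Type*} {S : ℝ → Set X} {f : X → X} {r₀ r : ℝ}
    (hf : ∀ s, 0 < s → s ≤ r₀ → MapsTo f (S s) (S (s / 2))) (hr : 0 < r) (hrr₀ : r ≤ r₀)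
    {x : X} (hx : x ∈ S r) : ∀ n : ℕ, f^[n] x ∈ S (r / 2 ^ n)
  | 0 => by simpa using hx
  | n + 1 => by
    rw [iterate_succ_apply', pow_succ, ← div_div]
    exact hf _ (by positivity) ((div_le_self hr.le (one_le_pow₀ one_le_two)).trans hrr₀)
      (iterate_mem_of_mapsTo_half hf hr hrr₀ hx n)

lemma exists_pos_forall_le_of_eventually {P : ℝ → Prop} (h : ∀ᶠ s in 𝓝[>] 0, P s) :
    ∃ r₀ > 0, ∀ s, 0 < s → s ≤ r₀ → P s := by
  obtain ⟨r₀, hr₀, hsub⟩ := mem_nhdsGT_iff_exists_Ioc_subset.1 h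
  exact ⟨r₀, hr₀, fun s hs hsr₀ => hsub ⟨hs, hsr₀⟩⟩

lemma eventually_le_of_continuousAt {g : ℝ → ℝ} (hg : ContinuousAt g 0) (h0 : g 0 = 0) {c : ℝ}
    (hc : 0 < c) : ∀ᶠ s in 𝓝[>] 0, g s ≤ c :=
  ((h0 ▸ hg.tendsto).mono_left nhdsWithin_le_nhds).eventually_le_const hc

lemma exists_mapsTo_weightedCone_half {F : ℂ × ℂ → ℂ × ℂ} {ζ : ℂ → ℂ} {η : ℂ × ℂ → ℂ}
    {δ γ : ℕ} {b : ℂ} {α ρ C₁ C₂ : ℝ} (hγ : γ ≠ 0) (hb : b ≠ 0) (hα : 0 ≤ α)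
    (hαγ : α * γ + 1 < δ) (hρ : 0 < ρ) (hρ1 : ρ ≤ 1)
    (hF : ∀ zw : ℂ × ℂ, zw.1 ≠ 0 → zw.2 ≠ 0 →
      F zw = (zw.1 ^ δ * (1 + ζ zw.1), b * zw.1 ^ γ * zw.2 * (1 + η zw)))
    (hζ : ∀ s ≤ ρ, ∀ zw ∈ weightedCone α s, ‖ζ zw.1‖ ≤ C₁ * s)
    (hη : ∀ s ≤ ρ, ∀ zw ∈ weightedCone α s, ‖η zw‖ ≤ C₂ * s) :
    ∃ r₀ > 0, r₀ ≤ ρ ∧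
      ∀ s, 0 < s → s ≤ r₀ → MapsTo F (weightedCone α s) (weightedCone α (s / 2)) := by
  have ht : 0 < (δ : ℝ) - α * γ - 1 := by linarith
  obtain ⟨r₀, hr₀, hsmall⟩ := exists_pos_forall_le_of_eventually <|
    (eventually_le_of_continuousAt continuousAt_id rfl hρ).and <|
    (eventually_le_of_continuousAt (g := fun s => C₁ * s) (by fun_prop) (mul_zero _)
      one_half_pos).and <|
    (eventually_le_of_continuousAt (g := fun s => C₂ * s) (by fun_prop) (mul_zero _)
      one_half_pos).and <|
    (eventually_le_of_continuousAt (g := fun s => 4 * ‖b‖ * s ^ γ) (by fun_prop)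
      (by simp [zero_pow hγ]) one_pos).and <|
    eventually_le_of_continuousAt (g := fun s => 4 * s ^ ((δ : ℝ) - α * γ - 1))
      ((Real.continuousAt_rpow_const _ _ (Or.inr ht.le)).const_mul 4)
      (by simp [Real.zero_rpow ht.ne']) (by positivity : 0 < (‖b‖ / 2) ^ α)
  refine ⟨r₀, hr₀, (hsmall r₀ hr₀ le_rfl).1, fun s hs hsr₀ zw hzw => ?_⟩
  obtain ⟨hsρ, hC₁s, hC₂s, hbs, hts⟩ := hsmall s hs hsr₀
  rw [hF zw hzw.1 hzw.2.1]
  exact mem_weightedCone_half hα hαγ.le hb (hsρ.trans hρ1) ((hζ s hsρ zw hzw).trans hC₁s)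
    ((hη s hsρ zw hzw).trans hC₂s) hbs hts hzw

lemma norm_add_div_sub_one_le {u T : ℂ} {K : ℝ} (hu : u ≠ 0) (hT : ‖T‖ ≤ K * ‖u‖) :
    ‖(u + T) / u - 1‖ ≤ K := by
  rw [add_div, div_self hu, add_sub_cancel_left, norm_div]
  exact (div_le_iff₀ (norm_pos_iff.2 hu)).2 hT

lemma eq_mul_one_add_of_eq_div_sub_one_s13 {u P e : ℂ} (hu : u ≠ 0) (h : e = P / u - 1) :
    P = u * (1 + e) := by
  rw [h, add_sub_cancel, mul_div_cancel₀ _ hu]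

lemma nonneg_and_weight_le {c : ℕ → ℕ → ℂ} {γ δ : ℕ} {A : Set ℝ} {α : ℝ}
    (hA : A = {x : ℝ | 0 ≤ x ∧ x * γ + 1 ≤ δ ∧
      ∀ n m : ℕ, c n m ≠ 0 → x * γ + 1 ≤ x * n + m})
    (hα : α ∈ A ∨ ((∀ n m : ℕ, m = 0 → c n m = 0) ∧ α = 0)) :
    0 ≤ α ∧ ∀ n m : ℕ, c n m ≠ 0 → α * γ + 1 ≤ α * n + m := by
  rcases hα with hαA | ⟨htriv, rfl⟩
  · rw [hA] at hαA
    exact ⟨hαA.1, hαA.2.2⟩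
  · refine ⟨le_rfl, fun n m hnm => ?_⟩
    have hm : 1 ≤ m := Nat.one_le_iff_ne_zero.2 fun hm => hnm (htriv n m hm)
    simpa using (Nat.one_le_cast.2 hm : (1 : ℝ) ≤ m)

lemma exists_norm_div_pow_sub_one_le {a : ℕ → ℂ} {δ : ℕ} {ρ : ℝ} {p ζ : ℂ → ℂ}
    (ha : ∀ k ≤ δ, a k = 0) (hρ : 0 < ρ) (hsum : Summable fun k => a k * (2 * ρ : ℂ) ^ k)
    (hp : ∀ z : ℂ, ‖z‖ ≤ ρ → p z = z ^ δ + ∑' k, a k * z ^ k)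
    (hζ : ∀ z : ℂ, z ≠ 0 → ζ z = p z / z ^ δ - 1) :
    ∃ C > 0, ∀ z : ℂ, z ≠ 0 → ‖z‖ ≤ ρ → ‖ζ z‖ ≤ C * ‖z‖ := by
  obtain ⟨C, hC, htail⟩ :=
    exists_norm_tsum_mul_pow_le (N := δ + 1) (fun k hk => ha k (by omega)) hρ hsum
  refine ⟨C, hC, fun z hz hzρ => ?_⟩
  rw [hζ z hz, hp z hzρ]
  refine norm_add_div_sub_one_le (pow_ne_zero _ hz) ?_
  calc _ ≤ C * ‖z‖ ^ (δ + 1) := htail z hzρ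
    _ = C * ‖z‖ * ‖z ^ δ‖ := by rw [norm_pow, pow_succ]; ring

lemma exists_norm_div_monomial_sub_one_le {c : ℕ → ℕ → ℂ} {γ : ℕ} {α ρ : ℝ} {b : ℂ}
    {q : ℂ → ℂ → ℂ} {η : ℂ × ℂ → ℂ} (hb : b ≠ 0) (hα : 0 ≤ α)
    (hsupp : ∀ n m, c n m ≠ 0 → γ ≤ n ∧ (γ < n ∨ 1 < m))
    (hweight : ∀ n m, c n m ≠ 0 → α * γ + 1 ≤ α * n + m) (hρ : 0 < ρ) (hρ1 : ρ ≤ 1)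
    (hsum : Summable fun nm : ℕ × ℕ => c nm.1 nm.2 * (2 * ρ : ℂ) ^ nm.1 * (2 * ρ : ℂ) ^ nm.2)
    (hq : ∀ z w : ℂ, ‖z‖ ≤ ρ → ‖w‖ ≤ ρ →
      q z w = b * z ^ γ * w + ∑' nm : ℕ × ℕ, c nm.1 nm.2 * z ^ nm.1 * w ^ nm.2)
    (hη : ∀ zw : ℂ × ℂ, zw.1 ≠ 0 → zw.2 ≠ 0 →
      η zw = q zw.1 zw.2 / (b * zw.1 ^ γ * zw.2) - 1) :
    ∃ C > 0, ∀ s ≤ ρ, ∀ zw ∈ weightedCone α s, ‖η zw‖ ≤ C * s := by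
  obtain ⟨C, hC, htail⟩ := exists_norm_tsum_le_of_mem_weightedCone hα hsupp hweight hρ hρ1 hsum
  refine ⟨C / ‖b‖, by positivity, fun s hsρ zw hzw => ?_⟩
  have hxs := norm_fst_lt_of_mem_weightedCone hα (hsρ.trans hρ1) hzw
  obtain ⟨hz, hw, -, hws⟩ := id hzw
  rw [hη zw hz hw, hq _ _ (hxs.le.trans hsρ) (hws.le.trans hsρ)]
  refine norm_add_div_sub_one_le (by simp [hb, hz, hw]) ?_
  calc _ ≤ C * s * ‖zw.1‖ ^ γ * ‖zw.2‖ := htail s hsρ zw hzw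
    _ = C / ‖b‖ * s * ‖b * zw.1 ^ γ * zw.2‖ := by
        rw [norm_mul, norm_mul, norm_pow]
        field_simp

theorem iterate_error_estimates_general
    (δ γ : ℕ) (hγ : 1 ≤ γ)
    (b : ℂ) (hb : b ≠ 0)
    (R : ℝ) (hR : 0 < R)
    (a : ℕ → ℂ) (ha : ∀ k : ℕ, k ≤ δ → a k = 0)
    (c : ℕ → ℕ → ℂ)
    (hc : ∀ n m : ℕ, c n m ≠ 0 → 2 ≤ n + m ∧ (γ < n ∨ (n = γ ∧ 1 < m)))
    (p : ℂ → ℂ) (q : ℂ → ℂ → ℂ)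
    (hpsum : ∀ z : ℂ, ‖z‖ < R → Summable (fun k : ℕ => a k * z ^ k))
    (hp : ∀ z : ℂ, ‖z‖ < R → p z = z ^ δ + ∑' k : ℕ, a k * z ^ k)
    (hqsum : ∀ z w : ℂ, ‖z‖ < R → ‖w‖ < R →
      Summable (fun nm : ℕ × ℕ => c nm.1 nm.2 * z ^ nm.1 * w ^ nm.2))
    (hq : ∀ z w : ℂ, ‖z‖ < R → ‖w‖ < R →
      q z w = b * z ^ γ * w + ∑' nm : ℕ × ℕ, c nm.1 nm.2 * z ^ nm.1 * w ^ nm.2)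
    (f : ℂ × ℂ → ℂ × ℂ) (hf : ∀ zw : ℂ × ℂ, f zw = (p zw.1, q zw.1 zw.2))
    (ζ : ℂ → ℂ) (hζ : ∀ z : ℂ, z ≠ 0 → ζ z = p z / z ^ δ - 1)
    (η : ℂ × ℂ → ℂ)
    (hη : ∀ zw : ℂ × ℂ, zw.1 ≠ 0 → zw.2 ≠ 0 →
      η zw = q zw.1 zw.2 / (b * zw.1 ^ γ * zw.2) - 1)
    (A : Set ℝ)
    (hA : A = {x : ℝ | 0 ≤ x ∧ x * γ + 1 ≤ δ ∧
      ∀ n m : ℕ, c n m ≠ 0 → x * γ + 1 ≤ x * n + m})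
    (α : ℝ)
    (hα : IsLeast A α ∨ (A = ∅ ∧ (∀ n m : ℕ, m = 0 → c n m = 0) ∧ α = 0))
    (hαγ : α * γ < δ - 1)
    (U : ℝ → Set (ℂ × ℂ))
    (hU : ∀ r : ℝ, U r = {zw : ℂ × ℂ |
      ‖zw.1‖ < r * ‖zw.2‖ ^ α ∧ ‖zw.2‖ < r}) :
    ∃ C₁ C₂ r₀ : ℝ, 0 < C₁ ∧ 0 < C₂ ∧ 0 < r₀ ∧
      ∀ r : ℝ, 0 < r → r ≤ r₀ → ∀ zw ∈ U r, zw.1 ≠ 0 → zw.2 ≠ 0 →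
        ∀ n : ℕ,
          p^[n] zw.1 ≠ 0 ∧ (f^[n] zw).1 ≠ 0 ∧ (f^[n] zw).2 ≠ 0 ∧
          ‖ζ (p^[n] zw.1)‖ ≤ C₁ * r / 2 ^ n ∧
          ‖η (f^[n] zw)‖ ≤ C₂ * r / 2 ^ n := by
  obtain ⟨hα0, hweight⟩ := nonneg_and_weight_le hA (hα.imp (·.1) (·.2))
  have hsupp : ∀ n m, c n m ≠ 0 → γ ≤ n ∧ (γ < n ∨ 1 < m) := fun n m h => by
    have := (hc n m h).2
    omega
  obtain ⟨ρ, hρ0, hρ1, hρR⟩ : ∃ ρ : ℝ, 0 < ρ ∧ ρ ≤ 1 ∧ 2 * ρ < R :=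
    ⟨min R 1 / 4, by positivity, by linarith [min_le_right R 1], by linarith [min_le_left R 1]⟩
  have h2ρ : ‖(2 * ρ : ℂ)‖ < R := by
    rwa [norm_mul, Complex.norm_ofNat, Complex.norm_real, Real.norm_of_nonneg hρ0.le]
  obtain ⟨C₁, hC₁, hζle⟩ := exists_norm_div_pow_sub_one_le ha hρ0 (hpsum _ h2ρ)
    (fun z hz => hp z (by linarith)) hζ
  obtain ⟨C₂, hC₂, hηle⟩ := exists_norm_div_monomial_sub_one_le hb hα0 hsupp hweight hρ0 hρ1
    (hqsum _ _ h2ρ h2ρ) (fun z w hz hw => hq z w (by linarith) (by linarith)) hη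
  have hζs : ∀ s ≤ ρ, ∀ zw ∈ weightedCone α s, ‖ζ zw.1‖ ≤ C₁ * s := fun s hsρ zw hzw => by
    have hxs := (norm_fst_lt_of_mem_weightedCone hα0 (hsρ.trans hρ1) hzw).le
    exact (hζle _ hzw.1 (hxs.trans hsρ)).trans (by gcongr)
  obtain ⟨r₀, hr₀, hr₀ρ, hstep⟩ := exists_mapsTo_weightedCone_half (F := f) (δ := δ) (γ := γ)
    (by omega) hb hα0 (by linarith) hρ0 hρ1 (fun zw hz hw => by
      rw [hf, eq_mul_one_add_of_eq_div_sub_one_s13 (pow_ne_zero δ hz) (hζ _ hz),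
        eq_mul_one_add_of_eq_div_sub_one_s13 (by simp [hb, hz, hw]) (hη _ hz hw)]) hζs hηle
  refine ⟨C₁, C₂, r₀, hC₁, hC₂, hr₀, fun r hr hrr₀ zw hzw hz hw n => ?_⟩
  rw [hU] at hzw
  have hn := iterate_mem_of_mapsTo_half hstep hr hrr₀ (x := zw) ⟨hz, hw, hzw⟩ n
  have hsn : r / 2 ^ n ≤ ρ := (div_le_self hr.le (one_le_pow₀ one_le_two)).trans (hrr₀.trans hr₀ρ)
  have hfst : (f^[n] zw).1 = p^[n] zw.1 := Semiconj.iterate_right (fun zw => by rw [hf]) n zw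
  rw [← hfst, mul_div_assoc, mul_div_assoc]
  exact ⟨hn.1, hn.1, hn.2.1, hζs _ hsn _ hn, hηle _ hsn _ hn⟩

/-- Lemma 5.2 of Ueno (case `d = 1`): if the weight `α` is well-defined and
`αγ < δ − 1`, then there are constants `C₁, C₂, r₀ > 0` such that for
`0 < r ≤ r₀`, `(z,w) ∈ U^α_r` with `z ≠ 0 ≠ w` and every `n ≥ 0`, the iterates
have nonzero coordinates and `|ζ(p^n(z))| ≤ C₁ r/2^n`, `|η(f^n(z,w))| ≤ C₂ r/2^n`,
where `ζ(z) = p(z)/z^δ − 1` and `η(z,w) = q(z,w)/(b z^γ w) − 1`. -/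
theorem iterate_error_estimates
    (δ γ : ℕ) (hδ : 2 ≤ δ) (hγ : 1 ≤ γ)
    (b : ℂ) (hb : b ≠ 0)
    (R : ℝ) (hR : 0 < R)
    (a : ℕ → ℂ) (ha : ∀ k : ℕ, k ≤ δ → a k = 0)
    (c : ℕ → ℕ → ℂ)
    (hc : ∀ n m : ℕ, c n m ≠ 0 → 2 ≤ n + m ∧ (γ < n ∨ (n = γ ∧ 1 < m)))
    (p : ℂ → ℂ) (q : ℂ → ℂ → ℂ)
    (hpsum : ∀ z : ℂ, ‖z‖ < R → Summable (fun k : ℕ => a k * z ^ k))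
    (hp : ∀ z : ℂ, ‖z‖ < R → p z = z ^ δ + ∑' k : ℕ, a k * z ^ k)
    (hqsum : ∀ z w : ℂ, ‖z‖ < R → ‖w‖ < R →
      Summable (fun nm : ℕ × ℕ => c nm.1 nm.2 * z ^ nm.1 * w ^ nm.2))
    (hq : ∀ z w : ℂ, ‖z‖ < R → ‖w‖ < R →
      q z w = b * z ^ γ * w + ∑' nm : ℕ × ℕ, c nm.1 nm.2 * z ^ nm.1 * w ^ nm.2)
    (f : ℂ × ℂ → ℂ × ℂ) (hf : ∀ zw : ℂ × ℂ, f zw = (p zw.1, q zw.1 zw.2))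
    (ζ : ℂ → ℂ) (hζ : ∀ z : ℂ, z ≠ 0 → ζ z = p z / z ^ δ - 1)
    (η : ℂ × ℂ → ℂ)
    (hη : ∀ zw : ℂ × ℂ, zw.1 ≠ 0 → zw.2 ≠ 0 →
      η zw = q zw.1 zw.2 / (b * zw.1 ^ γ * zw.2) - 1)
    (A : Set ℝ)
    (hA : A = {x : ℝ | 0 ≤ x ∧ x * γ + 1 ≤ δ ∧
      ∀ n m : ℕ, c n m ≠ 0 → x * γ + 1 ≤ x * n + m})
    (α : ℝ)
    (hα : IsLeast A α ∨ (A = ∅ ∧ (∀ n m : ℕ, m = 0 → c n m = 0) ∧ α = 0))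
    (hαγ : α * γ < δ - 1)
    (U : ℝ → Set (ℂ × ℂ))
    (hU : ∀ r : ℝ, U r = {zw : ℂ × ℂ |
      ‖zw.1‖ < r * ‖zw.2‖ ^ α ∧ ‖zw.2‖ < r}) :
    ∃ C₁ C₂ r₀ : ℝ, 0 < C₁ ∧ 0 < C₂ ∧ 0 < r₀ ∧
      ∀ r : ℝ, 0 < r → r ≤ r₀ → ∀ zw ∈ U r, zw.1 ≠ 0 → zw.2 ≠ 0 →
        ∀ n : ℕ,
          p^[n] zw.1 ≠ 0 ∧ (f^[n] zw).1 ≠ 0 ∧ (f^[n] zw).2 ≠ 0 ∧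
          ‖ζ (p^[n] zw.1)‖ ≤ C₁ * r / 2 ^ n ∧
          ‖η (f^[n] zw)‖ ≤ C₂ * r / 2 ^ n :=
  iterate_error_estimates_general δ γ hγ b hb R hR a ha c hc p q hpsum hp hqsum hq f hf ζ hζ η hη A
    hA α hα hαγ U hU
end

section
/- Let m, n ∈ ℂ and let L = {(Z, mZ + n) : Z ∈ ℂ}, and suppose L ∩ V' ≠ ∅. If |m| ≤ 1, then dist(S₁', ∂S₁) ≥ 2ε, where S₁ = {Z ∈ ℂ : (Z, mZ + n) ∈ V} and S₁' = {Z ∈ ℂ : (Z, mZ + n) ∈ V'}. If |m| ≥ 1 (so in particular m ≠ 0), then dist(S₂', ∂S₂) ≥ 2ε, where S₂ = {W ∈ ℂ : ((W − n)/m, W) ∈ V} and S₂' = {W ∈ ℂ : ((W − n)/m, W) ∈ V'}. -/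
/-!
In the slice coordinate `z`, both `V` and `V'` are cut out by two real functions `f` and `g`
(the real parts of the two coordinates of the point of `L` over `z`), and the assumption on `|m|`
is exactly what makes both of them `1`-Lipschitz in `z`. The upper constraint `g < log r₂` then
moves by at most `dist x y`, and the lower one, rewritten as `α g - f > log r₁`, by at most
`(1 + α) dist x y`; the margins `2ε` and `2ε (1 + α)` built into `V'` are exactly these amounts.
-/

lemma LipschitzWith.re_comp {X : Type*} [PseudoEMetricSpace X] {φ : X → ℂ}
    (hφ : LipschitzWith 1 φ) : LipschitzWith 1 fun x => (φ x).re := by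
  simpa [Function.comp_def] using (RCLike.lipschitzWith_re (K := ℂ)).comp hφ

lemma lipschitzWith_one_mul_add {𝕜 : Type*} [NormedField 𝕜] {m : 𝕜} (hm : ‖m‖ ≤ 1) (n : 𝕜) :
    LipschitzWith 1 fun z => m * z + n :=
  LipschitzWith.of_dist_le_mul fun z w => by
    rw [dist_eq_norm, dist_eq_norm, add_sub_add_right_eq_sub, ← mul_sub, norm_mul, NNReal.coe_one]
    exact mul_le_mul_of_nonneg_right hm (norm_nonneg _)

lemma lipschitzWith_one_sub_div {𝕜 : Type*} [NormedField 𝕜] {m : 𝕜} (hm : 1 ≤ ‖m‖) (n : 𝕜) :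
    LipschitzWith 1 fun w => (w - n) / m :=
  LipschitzWith.of_dist_le_mul fun z w => by
    rw [dist_eq_norm, dist_eq_norm, ← sub_div, sub_sub_sub_cancel_right, norm_div,
      NNReal.coe_one, one_mul]
    exact div_le_self (norm_nonneg _) hm

theorem two_mul_le_dist_of_mem_frontier {X : Type*} [PseudoMetricSpace X] {f g : X → ℝ}
    (hf : LipschitzWith 1 f) (hg : LipschitzWith 1 g) {α ε a b : ℝ} (hα : 0 < α) {x y : X}
    (hx : x ∈ {z | (f z - a) / α + 2 * ε * (1 + α) / α < g z ∧ g z < b - 2 * ε})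
    (hy : y ∈ frontier {z | (f z - a) / α < g z ∧ g z < b}) :
    2 * ε ≤ dist x y := by
  have hopen : IsOpen {z | (f z - a) / α < g z ∧ g z < b} :=
    (isOpen_lt ((hf.continuous.sub continuous_const).div_const α) hg.continuous).inter
      (isOpen_lt hg.continuous continuous_const)
  have hy' : ¬((f y - a) / α < g y ∧ g y < b) :=
    Set.disjoint_left.mp (disjoint_frontier_iff_isOpen.mpr hopen) hy
  obtain ⟨hx_low, hx_up⟩ := hx
  have hf_yx := hf.le_add_mul y x
  have hg_xy := hg.le_add_mul x y
  have hg_yx := hg.le_add_mul y x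
  rw [NNReal.coe_one, dist_comm y x] at hf_yx hg_yx
  rw [NNReal.coe_one] at hg_xy
  rw [not_and_or, not_lt, not_lt] at hy'
  rcases hy' with hy_low | hy_up
  · rw [← add_div, div_lt_iff₀ hα] at hx_low
    rw [le_div_iff₀ hα] at hy_low
    have hαg := mul_le_mul_of_nonneg_left hg_xy hα.le
    have h : (1 + α) * (2 * ε) < (1 + α) * dist x y := by linarith
    exact (lt_of_mul_lt_mul_left h (by positivity)).le
  · linarith

theorem slice_distance_general
    (α ε r₁ r₂ : ℝ) (hα : 0 < α)
    (V V' : Set (ℂ × ℂ))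
    (hV : V = {ZW : ℂ × ℂ |
      (ZW.1.re - Real.log r₁) / α < ZW.2.re ∧ ZW.2.re < Real.log r₂})
    (hV' : V' = {ZW : ℂ × ℂ |
      (ZW.1.re - Real.log r₁) / α + 2 * ε * (1 + α) / α < ZW.2.re ∧
      ZW.2.re < Real.log r₂ - 2 * ε})
    (m n : ℂ) :
    (‖m‖ ≤ 1 →
      ∀ x ∈ {Z : ℂ | (Z, m * Z + n) ∈ V'},
        ∀ y ∈ frontier {Z : ℂ | (Z, m * Z + n) ∈ V}, 2 * ε ≤ dist x y) ∧
    (1 ≤ ‖m‖ →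
      ∀ x ∈ {W : ℂ | ((W - n) / m, W) ∈ V'},
        ∀ y ∈ frontier {W : ℂ | ((W - n) / m, W) ∈ V}, 2 * ε ≤ dist x y) := by
  subst hV hV'
  have hre : LipschitzWith 1 Complex.re := LipschitzWith.re_comp LipschitzWith.id
  refine ⟨fun hm x hx y hy => ?_, fun hm x hx y hy => ?_⟩
  · exact two_mul_le_dist_of_mem_frontier (f := Complex.re) (g := fun Z => (m * Z + n).re)
      hre (lipschitzWith_one_mul_add hm n).re_comp hα hx hy
  · exact two_mul_le_dist_of_mem_frontier (f := fun W => ((W - n) / m).re) (g := Complex.re)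
      (lipschitzWith_one_sub_div hm n).re_comp hre hα hx hy

/-- Lemma 6.3 of Ueno: for a complex line `L = {W = mZ + n}` meeting `V'`, the
slice of `V'` along `L` (in the `Z`-coordinate if `|m| ≤ 1`, in the
`W`-coordinate if `|m| ≥ 1`) lies at distance at least `2ε` from the boundary
of the corresponding slice of `V`. -/
theorem slice_distance
    (α ε r₁ r₂ : ℝ) (hα : 0 < α) (hε : 0 < ε) (hr₁ : 0 < r₁) (hr₂ : 0 < r₂)
    (V V' : Set (ℂ × ℂ))
    (hV : V = {ZW : ℂ × ℂ |
      (ZW.1.re - Real.log r₁) / α < ZW.2.re ∧ ZW.2.re < Real.log r₂})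
    (hV' : V' = {ZW : ℂ × ℂ |
      (ZW.1.re - Real.log r₁) / α + 2 * ε * (1 + α) / α < ZW.2.re ∧
      ZW.2.re < Real.log r₂ - 2 * ε})
    (m n : ℂ)
    (hL : ∃ Z : ℂ, (Z, m * Z + n) ∈ V') :
    (‖m‖ ≤ 1 →
      ∀ x ∈ {Z : ℂ | (Z, m * Z + n) ∈ V'},
        ∀ y ∈ frontier {Z : ℂ | (Z, m * Z + n) ∈ V}, 2 * ε ≤ dist x y) ∧
    (1 ≤ ‖m‖ →
      ∀ x ∈ {W : ℂ | ((W - n) / m, W) ∈ V'},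
        ∀ y ∈ frontier {W : ℂ | ((W - n) / m, W) ∈ V}, 2 * ε ≤ dist x y) :=
  slice_distance_general α ε r₁ r₂ hα V V' hV hV' m n
end

section
/- Let Φ = (Φ₁, Φ₂) : V → ℂ² be a holomorphic map satisfying max(|Φ₁(Z,W) − Z|, |Φ₂(Z,W) − W|) < ε for all (Z,W) ∈ V. Then Φ is injective on V'. -/
/-!
Write `g = Φ - id`. For `x ∈ V'` and a direction `v` of sup-norm one, the disc
`{x + z • v : |z| ≤ 2ε}` lies in `V`, where `‖g‖ < ε`; the Cauchy estimate on this complex line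
gives `‖Dg(x)‖ ≤ ε / 2ε = 1/2`. Since `V'` is convex, `g` is `1/2`-Lipschitz on `V'`, whereas
`Φ x = Φ y` forces `g x - g y = y - x`, so `x = y`.
-/

open Metric Set

section

variable {E F : Type*} [NormedAddCommGroup E] [NormedSpace ℂ E]
  [NormedAddCommGroup F] [NormedSpace ℂ F]

theorem norm_fderiv_apply_le_of_forall_mem_sphere_norm_le {g : E → F} {x : E} {r C : ℝ}
    (hr : 0 < r) (hg : DiffContOnCl ℂ g (ball x r)) (hC : ∀ y ∈ sphere x r, ‖g y‖ ≤ C) (v : E) :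
    ‖fderiv ℂ g x v‖ ≤ C / r * ‖v‖ := by
  rcases eq_or_ne v 0 with rfl | hv
  · simp
  have hv' : 0 < ‖v‖ := norm_pos_iff.mpr hv
  set line : ℂ → E := fun z ↦ x + z • v
  have hline_dist (z : ℂ) : dist (line z) x = ‖z‖ * ‖v‖ := by
    simp [line, dist_eq_norm, norm_smul]
  have hline : DiffContOnCl ℂ (g ∘ line) (ball 0 (r / ‖v‖)) := by
    refine hg.comp ((differentiable_const x).add (differentiable_id.smul_const v)).diffContOnCl
      fun z hz ↦ ?_
    rw [mem_ball_zero_iff, lt_div_iff₀ hv'] at hz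
    rwa [mem_ball, hline_dist]
  have hsphere : ∀ z ∈ sphere (0 : ℂ) (r / ‖v‖), ‖(g ∘ line) z‖ ≤ C := fun z hz ↦ by
    rw [mem_sphere_zero_iff_norm, eq_div_iff hv'.ne'] at hz
    exact hC _ (by rw [mem_sphere, hline_dist, hz])
  have hderiv : deriv (g ∘ line) 0 = fderiv ℂ g x v := by
    have hgx : DifferentiableAt ℂ g x :=
      hg.differentiableOn.differentiableAt (isOpen_ball.mem_nhds (mem_ball_self hr))
    have hline' : HasDerivAt line v 0 := by
      simpa [line] using ((hasDerivAt_id (0 : ℂ)).smul_const v).const_add x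
    exact (hgx.hasFDerivAt.comp_hasDerivAt_of_eq 0 hline' (by simp [line])).deriv
  calc ‖fderiv ℂ g x v‖ = ‖deriv (g ∘ line) 0‖ := by rw [hderiv]
    _ ≤ C / (r / ‖v‖) :=
      Complex.norm_deriv_le_of_forall_mem_sphere_norm_le (div_pos hr hv') hline hsphere
    _ = C / r * ‖v‖ := by field_simp

theorem injOn_of_norm_sub_self_le {Φ : E → E} {s t : Set E} {r C : ℝ} (hr : 0 < r)
    (hCr : C < r) (hΦ : DifferentiableOn ℂ Φ t) (hclose : ∀ y ∈ t, ‖Φ y - y‖ ≤ C)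
    (hs : Convex ℝ s) (hst : ∀ x ∈ s, closedBall x r ⊆ t) : InjOn Φ s := by
  intro x hx y hy hxy
  set g : E → E := fun z ↦ Φ z - z
  have hC : 0 ≤ C := (norm_nonneg _).trans (hclose x (hst x hx (mem_closedBall_self hr.le)))
  have hg_diff : ∀ z ∈ s, DifferentiableAt ℂ g z := fun z hz ↦
    ((hΦ.differentiableAt (Filter.mem_of_superset (closedBall_mem_nhds z hr) (hst z hz))).sub
      differentiableAt_id)
  have hg_fderiv : ∀ z ∈ s, ‖fderiv ℂ g z‖ ≤ C / r := fun z hz ↦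
    ContinuousLinearMap.opNorm_le_bound _ (div_nonneg hC hr.le) <|
      norm_fderiv_apply_le_of_forall_mem_sphere_norm_le hr
        ((hΦ.sub differentiableOn_id).diffContOnCl_ball (hst z hz))
        fun w hw ↦ hclose w (hst z hz (sphere_subset_closedBall hw))
  have hlip : ‖y - x‖ ≤ C / r * ‖y - x‖ := by
    have := hs.norm_image_sub_le_of_norm_fderiv_le hg_diff hg_fderiv hx hy
    rwa [show g y - g x = -(y - x) by simp only [g, hxy]; abel, norm_neg] at this
  have hCr' : C / r < 1 := (div_lt_one hr).mpr hCr
  by_contra hne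
  have hpos : 0 < ‖y - x‖ := norm_pos_iff.mpr (sub_ne_zero.mpr (Ne.symm hne))
  exact (hlip.trans_lt (mul_lt_of_lt_one_left hpos hCr')).false

end

def tubeDomain (α a K b : ℝ) : Set (ℂ × ℂ) :=
  {ZW | (ZW.1.re - a) / α + K < ZW.2.re ∧ ZW.2.re < b}

theorem convex_tubeDomain (α a K b : ℝ) : Convex ℝ (tubeDomain α a K b) := by
  refine convex_iff_forall_pos.mpr fun x hx y hy s t hs ht hst ↦ ?_
  simp only [tubeDomain, mem_ofPred_eq, Prod.fst_add, Prod.snd_add, Prod.smul_fst,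
    Prod.smul_snd, Complex.add_re, Complex.smul_re, smul_eq_mul] at hx hy ⊢
  obtain rfl : t = 1 - s := by linarith
  constructor
  · calc (s * x.1.re + (1 - s) * y.1.re - a) / α + K
          = s * ((x.1.re - a) / α + K) + (1 - s) * ((y.1.re - a) / α + K) := by ring
      _ < s * x.2.re + (1 - s) * y.2.re :=
          add_lt_add (mul_lt_mul_of_pos_left hx.1 hs) (mul_lt_mul_of_pos_left hy.1 ht)
  · calc s * x.2.re + (1 - s) * y.2.re < s * b + (1 - s) * b :=
          add_lt_add (mul_lt_mul_of_pos_left hx.2 hs) (mul_lt_mul_of_pos_left hy.2 ht)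
      _ = b := by ring

theorem closedBall_subset_tubeDomain {α a K b δ : ℝ} (hα : 0 < α) {x : ℂ × ℂ}
    (hx : x ∈ tubeDomain α a (K + δ * (1 + α) / α) (b - δ)) :
    closedBall x δ ⊆ tubeDomain α a K b := by
  intro y hy
  rw [mem_closedBall, dist_eq_norm, Prod.norm_def, max_le_iff] at hy
  have h₁ := (Complex.abs_re_le_norm _).trans hy.1
  have h₂ := (Complex.abs_re_le_norm _).trans hy.2
  simp only [Prod.fst_sub, Prod.snd_sub, Complex.sub_re, abs_le] at h₁ h₂
  have hdiv : (y.1.re - a) / α ≤ (x.1.re - a) / α + δ / α := by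
    rw [← add_div]; gcongr; linarith
  have hδ : δ * (1 + α) / α = δ / α + δ := by field_simp
  obtain ⟨hx₁, hx₂⟩ := hx
  exact ⟨by linarith, by linarith⟩

theorem Phi_injective_on_V'_general
    (α ε r₁ r₂ : ℝ) (hα : 0 < α) (hε : 0 < ε)
    (V V' : Set (ℂ × ℂ))
    (hV : V = {ZW : ℂ × ℂ |
      (ZW.1.re - Real.log r₁) / α < ZW.2.re ∧ ZW.2.re < Real.log r₂})
    (hV' : V' = {ZW : ℂ × ℂ |
      (ZW.1.re - Real.log r₁) / α + 2 * ε * (1 + α) / α < ZW.2.re ∧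
      ZW.2.re < Real.log r₂ - 2 * ε})
    (Φ : ℂ × ℂ → ℂ × ℂ)
    (hΦhol : DifferentiableOn ℂ Φ V)
    (hΦclose : ∀ ZW ∈ V,
      max (‖(Φ ZW).1 - ZW.1‖) (‖(Φ ZW).2 - ZW.2‖) < ε) :
    Set.InjOn Φ V' := by
  have hV₀ : V = tubeDomain α (Real.log r₁) 0 (Real.log r₂) := by simp [hV, tubeDomain]
  have hV'₀ :
      V' = tubeDomain α (Real.log r₁) (0 + 2 * ε * (1 + α) / α) (Real.log r₂ - 2 * ε) := by
    rw [hV', zero_add, tubeDomain]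
  -- `ℂ × ℂ` carries the sup norm, so `hΦclose` says `‖Φ ZW - ZW‖ < ε`.
  have hclose : ∀ ZW ∈ V, ‖Φ ZW - ZW‖ ≤ ε := fun ZW hZW ↦ by
    simpa only [Prod.norm_def, Prod.fst_sub, Prod.snd_sub] using (hΦclose ZW hZW).le
  rw [hV'₀]
  exact injOn_of_norm_sub_self_le (by linarith) (by linarith) hΦhol hclose
    (convex_tubeDomain _ _ _ _) fun x hx ↦ hV₀ ▸ closedBall_subset_tubeDomain hα hx

/-- Proposition 6.4 of Ueno: a holomorphic map `Φ` on
`V = {(Re Z − log r₁)/α < Re W < log r₂}` that is uniformly within `ε` of the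
identity in each coordinate is injective on the smaller region
`V' = {(Re Z − log r₁)/α + 2ε(1+α)/α < Re W < log r₂ − 2ε}`. -/
theorem Phi_injective_on_V'
    (α ε r₁ r₂ : ℝ) (hα : 0 < α) (hε : 0 < ε) (hr₁ : 0 < r₁) (hr₂ : 0 < r₂)
    (V V' : Set (ℂ × ℂ))
    (hV : V = {ZW : ℂ × ℂ |
      (ZW.1.re - Real.log r₁) / α < ZW.2.re ∧ ZW.2.re < Real.log r₂})
    (hV' : V' = {ZW : ℂ × ℂ |
      (ZW.1.re - Real.log r₁) / α + 2 * ε * (1 + α) / α < ZW.2.re ∧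
      ZW.2.re < Real.log r₂ - 2 * ε})
    (Φ : ℂ × ℂ → ℂ × ℂ)
    (hΦhol : DifferentiableOn ℂ Φ V)
    (hΦclose : ∀ ZW ∈ V,
      max (‖(Φ ZW).1 - ZW.1‖) (‖(Φ ZW).2 - ZW.2‖) < ε) :
    Set.InjOn Φ V' :=
  Phi_injective_on_V'_general α ε r₁ r₂ hα hε V V' hV hV' Φ hΦhol hΦclose
end
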